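/- For m>0 and K∈ℕ, K≥1, let μ_m^K be the probability measure on {(n_1,n_2)∈ℕ² : n_1+n_2=K} given by μ_m^K(n, K−n) = [Γ(m/2+n)Γ(m/2+K−n)/(n!(K−n)!)] / ∑_{l=0}^K Γ(m/2+l)Γ(m/2+K−l)/(l!(K−l)!). Then as m→0, μ_m^K converges to (1/2)(δ_{(K,0)} + δ_{(0,K)}): μ_m^K(η_1=0) → 1/2, μ_m^K(η_1=K) → 1/2, and μ_m^K(η_1=n) → 0 for every 0<n<K. -/

import Mathlib

open Filter Topology

/-! Only the boundary weights `n = 0, K` contain the factor `Γ(m/2) ~ 2/m`; all others stay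
bounded as `m → 0`. After multiplying every weight by `m`, the boundary weights tend to `2/K`
and the interior ones to `0`, so normalising gives mass `1/2` to each boundary configuration. -/

/-- The unnormalized canonical weight of `(n, K−n)` for the SIP on two sites:
`Γ(m/2+n)Γ(m/2+K−n)/(n!(K−n)!)`. -/
noncomputable def sip2Weight (m : ℝ) (K n : ℕ) : ℝ :=
  Real.Gamma (m / 2 + n) * Real.Gamma (m / 2 + (K - n : ℕ)) /
    (n.factorial * (K - n).factorial)

/-- The canonical measure of the SIP on two sites with `K` particles:
`μ_m^K(n, K−n) = sip2Weight m K n / ∑_{l=0}^K sip2Weight m K l`. -/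
noncomputable def sip2Canonical (m : ℝ) (K n : ℕ) : ℝ :=
  sip2Weight m K n / ∑ l ∈ Finset.range (K + 1), sip2Weight m K l

theorem tendsto_div_sum_of_tendsto_mul {ι α : Type*} {l : Filter α} {s : Finset ι}
    {f : ι → α → ℝ} {g : α → ℝ} {c : ι → ℝ} (hg : ∀ᶠ x in l, g x ≠ 0)
    (hf : ∀ i ∈ s, Tendsto (fun x => g x * f i x) l (𝓝 (c i))) (hc : ∑ i ∈ s, c i ≠ 0)
    {i : ι} (hi : i ∈ s) :
    Tendsto (fun x => f i x / ∑ j ∈ s, f j x) l (𝓝 (c i / ∑ j ∈ s, c j)) := by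
  have hsum : Tendsto (fun x => ∑ j ∈ s, g x * f j x) l (𝓝 (∑ j ∈ s, c j)) :=
    tendsto_finsetSum s hf
  refine ((hf i hi).div hsum hc).congr' ?_
  filter_upwards [hg] with x hx
  rw [Pi.div_apply, ← Finset.mul_sum, mul_div_mul_left _ _ hx]

theorem Real.continuousAt_Gamma_of_pos {s : ℝ} (hs : 0 < s) : ContinuousAt Real.Gamma s :=
  Real.differentiableOn_Gamma_Ioi.continuousOn.continuousAt (Ioi_mem_nhds hs)

theorem continuousAt_Gamma_half_add {a : ℝ} (ha : 0 < a) :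
    ContinuousAt (fun m : ℝ => Real.Gamma (m / 2 + a)) 0 :=
  (Real.continuousAt_Gamma_of_pos ha).comp_of_eq (by fun_prop) (by simp)

theorem tendsto_mul_Gamma_half :
    Tendsto (fun m : ℝ => m * Real.Gamma (m / 2)) (𝓝[≠] 0) (𝓝 2) := by
  have hlim : Tendsto (fun m : ℝ => 2 * Real.Gamma (m / 2 + 1)) (𝓝[≠] 0) (𝓝 2) := by
    simpa using ((continuousAt_Gamma_half_add one_pos).const_mul 2).tendsto.mono_left
      nhdsWithin_le_nhds
  refine hlim.congr' ?_
  filter_upwards [self_mem_nhdsWithin] with m hm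
  rw [Real.Gamma_add_one (div_ne_zero hm two_ne_zero)]
  field_simp

theorem Real.Gamma_nat_div_factorial {K : ℕ} (hK : 0 < K) :
    Real.Gamma K / K.factorial = 1 / K := by
  obtain ⟨k, rfl⟩ := Nat.exists_eq_add_of_lt hK
  rw [zero_add, Nat.cast_add_one, Real.Gamma_nat_eq_factorial, Nat.factorial_succ]
  push_cast
  field_simp

theorem sip2Weight_zero (m : ℝ) (K : ℕ) :
    sip2Weight m K 0 = Real.Gamma (m / 2) * Real.Gamma (m / 2 + K) / K.factorial := by
  simp [sip2Weight]

theorem sip2Weight_self (m : ℝ) (K : ℕ) : sip2Weight m K K = sip2Weight m K 0 := by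
  simp [sip2Weight, mul_comm]

theorem continuousAt_sip2Weight {K n : ℕ} (hn : 0 < n) (hnK : n < K) :
    ContinuousAt (fun m => sip2Weight m K n) 0 := by
  have hKn : (0 : ℝ) < (K - n : ℕ) := by exact_mod_cast Nat.sub_pos_of_lt hnK
  exact ((continuousAt_Gamma_half_add (by exact_mod_cast hn)).mul
    (continuousAt_Gamma_half_add hKn)).div_const _

theorem tendsto_mul_sip2Weight_zero {K : ℕ} (hK : 0 < K) :
    Tendsto (fun m => m * sip2Weight m K 0) (𝓝[≠] 0) (𝓝 (2 / K)) := by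
  have hGamma : Tendsto (fun m : ℝ => Real.Gamma (m / 2 + K)) (𝓝[≠] 0) (𝓝 (Real.Gamma K)) := by
    simpa using (continuousAt_Gamma_half_add (Nat.cast_pos.2 hK)).tendsto.mono_left
      nhdsWithin_le_nhds
  have h := (tendsto_mul_Gamma_half.mul hGamma).div_const (K.factorial : ℝ)
  rw [mul_div_assoc, Real.Gamma_nat_div_factorial hK, mul_one_div] at h
  simpa only [sip2Weight_zero, mul_div_assoc, mul_assoc] using h

noncomputable def sip2LimitWeight (K n : ℕ) : ℝ :=
  if n = 0 ∨ n = K then 2 / K else 0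

theorem tendsto_mul_sip2Weight {K n : ℕ} (hK : 0 < K) (hnK : n ≤ K) :
    Tendsto (fun m => m * sip2Weight m K n) (𝓝[≠] 0) (𝓝 (sip2LimitWeight K n)) := by
  rcases Nat.eq_zero_or_pos n with rfl | hn
  · simpa [sip2LimitWeight] using tendsto_mul_sip2Weight_zero hK
  rcases hnK.eq_or_lt with rfl | hnK
  · simpa [sip2LimitWeight, sip2Weight_self] using tendsto_mul_sip2Weight_zero hK
  have hm : Tendsto (fun m : ℝ => m) (𝓝[≠] 0) (𝓝 0) :=
    tendsto_nhdsWithin_of_tendsto_nhds tendsto_id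
  simpa [sip2LimitWeight, hn.ne', hnK.ne] using
    hm.mul ((continuousAt_sip2Weight hn hnK).tendsto.mono_left nhdsWithin_le_nhds)

theorem sum_sip2LimitWeight {K : ℕ} (hK : 0 < K) :
    ∑ l ∈ Finset.range (K + 1), sip2LimitWeight K l = 4 / K := by
  have hsupp : (Finset.range (K + 1)).filter (fun l => l = 0 ∨ l = K) = {0, K} := by
    ext l
    simp only [Finset.mem_filter, Finset.mem_range, Finset.mem_insert, Finset.mem_singleton]
    omega
  simp only [sip2LimitWeight]
  rw [Finset.sum_ite, Finset.sum_const_zero, add_zero, Finset.sum_const,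
    hsupp, Finset.card_pair hK.ne, nsmul_eq_mul]
  ring

theorem tendsto_sip2Canonical {K n : ℕ} (hK : 0 < K) (hnK : n ≤ K) :
    Tendsto (fun m => sip2Canonical m K n) (𝓝[≠] 0) (𝓝 (sip2LimitWeight K n * K / 4)) := by
  have hlim := tendsto_div_sum_of_tendsto_mul (l := 𝓝[≠] 0) (f := fun l m => sip2Weight m K l)
    self_mem_nhdsWithin
    (fun l hl => tendsto_mul_sip2Weight hK (Nat.lt_succ_iff.1 (Finset.mem_range.1 hl)))
    (by rw [sum_sip2LimitWeight hK]; positivity) (Finset.mem_range.2 (Nat.lt_succ_of_le hnK))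
  rwa [sum_sip2LimitWeight hK, div_div_eq_mul_div] at hlim

/-- **Condensation on two sites as `m → 0`**: the canonical measure `μ_m^K` converges to
`(1/2)(δ_{(K,0)} + δ_{(0,K)})`, i.e. `μ_m^K(η₁=0) → 1/2`, `μ_m^K(η₁=K) → 1/2`, and
`μ_m^K(η₁=n) → 0` for `0 < n < K`. -/
theorem sip_two_site_condensation
    (K : ℕ) (hK : 1 ≤ K) :
    Tendsto (fun m : ℝ => sip2Canonical m K 0) (𝓝[>] 0) (𝓝 (1 / 2)) ∧
    Tendsto (fun m : ℝ => sip2Canonical m K K) (𝓝[>] 0) (𝓝 (1 / 2)) ∧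
    (∀ n : ℕ, 0 < n → n < K →
      Tendsto (fun m : ℝ => sip2Canonical m K n) (𝓝[>] 0) (𝓝 0)) := by
  have hlim : ∀ n ≤ K, Tendsto (fun m => sip2Canonical m K n) (𝓝[>] 0)
      (𝓝 (sip2LimitWeight K n * K / 4)) := fun n hnK =>
    (tendsto_sip2Canonical hK hnK).mono_left (nhdsWithin_mono _ fun m hm => ne_of_gt hm)
  have hboundary : ∀ n, n = 0 ∨ n = K → sip2LimitWeight K n * K / 4 = 1 / 2 := by
    intro n hn
    rw [sip2LimitWeight, if_pos hn]
    field_simp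
    norm_num
  refine ⟨?_, ?_, fun n hn hnK => ?_⟩
  · simpa only [hboundary 0 (Or.inl rfl)] using hlim 0 K.zero_le
  · simpa only [hboundary K (Or.inr rfl)] using hlim K le_rfl
  · simpa [sip2LimitWeight, hn.ne', hnK.ne] using hlim n hnK.le
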